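/- Let D be a multiplicative Hom-Lie algebra structure on a Lie algebra g with D^m = D for some integer m ≥ 2. Then Der_k(g) = Der_s(g) whenever k, s > 0 and k ≡ s mod (m-1); consequently the Hilbert series Σ_{k≥0} dim Der_k(g)·t^k equals (ℓ_0(1-t^{m-1}) + Σ_{k=1}^{m-1} ℓ_k t^k)/(1-t^{m-1}) where ℓ_k = dim Der_k(g), assuming g is finite-dimensional over ℂ. -/

import Mathlib

/-! Since `D ^ m = D`, the powers `D ^ k` with `k > 0` are periodic in `k` with period `m - 1`,
and `Der_k(g)` depends on `k` only through `D ^ k`; so `k ↦ dim Der_k(g)` is periodic from `k = 1`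
on. Multiplying a power series with coefficients periodic of period `n` by `1 - t ^ n` leaves
exactly its first `n` terms. -/

/-- The space `Der_k(g)` of `D^k`-derivations, as a submodule of `End(g)`. -/
def DerK {g : Type*} [LieRing g] [LieAlgebra ℂ g] (D : g →ₗ[ℂ] g) (k : ℕ) :
    Submodule ℂ (g →ₗ[ℂ] g) where
  carrier := {δ | D ∘ₗ δ = δ ∘ₗ D ∧
    ∀ x y : g, δ ⁅x, y⁆ = ⁅δ x, (D ^ k) y⁆ + ⁅(D ^ k) x, δ y⁆}
  add_mem' := by
    rintro δ τ ⟨h1, h2⟩ ⟨h3, h4⟩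
    refine ⟨?_, fun x y => ?_⟩
    · ext v
      simp only [LinearMap.comp_apply, LinearMap.add_apply, map_add]
      rw [← LinearMap.comp_apply D δ, h1, ← LinearMap.comp_apply D τ, h3]; rfl
    · simp [LinearMap.add_apply, h2, h4, lie_add, add_lie]; abel
  zero_mem' := by exact ⟨by ext v; simp, fun x y => by simp⟩
  smul_mem' := by
    rintro c δ ⟨h1, h2⟩
    refine ⟨?_, fun x y => ?_⟩
    · ext v; simpa using congrArg (c • ·) (LinearMap.congr_fun h1 v)
    · simp [LinearMap.smul_apply, h2, lie_smul, smul_lie, smul_add]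

namespace PowerSeries

variable {R : Type*} [CommRing R]

theorem mk_mul_one_sub_X_pow_of_periodic {f : ℕ → R} {n : ℕ} (hf : Function.Periodic f n) :
    mk f * (1 - X ^ n) = ∑ k ∈ Finset.range n, C (f k) * X ^ k := by
  have hsplit := eq_X_pow_mul_shift_add_trunc n (mk f)
  simp only [coeff_mk, show ∀ i, f (i + n) = f i from hf] at hsplit
  have htrunc : (trunc n (mk f) : R⟦X⟧) = ∑ k ∈ Finset.range n, C (f k) * X ^ k := by
    ext j
    simp [coeff_trunc, coeff_X_pow]
  rw [← htrunc]
  linear_combination hsplit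

theorem sum_Icc_C_mul_X_pow (f : ℕ → R) (n : ℕ) :
    ∑ k ∈ Finset.Icc 1 n, C (f k) * X ^ k = X * ∑ k ∈ Finset.range n, C (f (k + 1)) * X ^ k := by
  rw [← Finset.Ico_add_one_right_eq_Icc, Finset.sum_Ico_eq_sum_range, Nat.add_sub_cancel,
    Finset.mul_sum]
  exact Finset.sum_congr rfl fun k _ => by rw [add_comm 1 k]; ring

theorem mk_mul_one_sub_X_pow_of_periodic_succ {f : ℕ → R} {n : ℕ}
    (hf : Function.Periodic (fun k => f (k + 1)) n) :
    mk f * (1 - X ^ n) = C (f 0) * (1 - X ^ n) + ∑ k ∈ Finset.Icc 1 n, C (f k) * X ^ k := by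
  have hsplit := eq_X_mul_shift_add_const (mk f)
  simp only [coeff_mk, ← coeff_zero_eq_constantCoeff_apply] at hsplit
  rw [sum_Icc_C_mul_X_pow, ← mk_mul_one_sub_X_pow_of_periodic hf]
  linear_combination (1 - X ^ n) * hsplit

end PowerSeries

theorem pow_add_pred_eq_pow {M : Type*} [Monoid M] {a : M} {m : ℕ} (h : a ^ m = a) {k : ℕ}
    (hk : 0 < k) : a ^ (k + (m - 1)) = a ^ k := by
  rcases Nat.eq_zero_or_pos m with rfl | hm
  · simp
  · obtain ⟨j, rfl⟩ := Nat.exists_eq_add_one_of_ne_zero hk.ne'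
    rw [show j + 1 + (m - 1) = j + m by omega, pow_add, h, ← pow_succ]

theorem pow_eq_pow_of_modEq_pred {M : Type*} [Monoid M] {a : M} {m : ℕ} (h : a ^ m = a)
    {k s : ℕ} (hk : 0 < k) (hs : 0 < s) (hks : k ≡ s [MOD m - 1]) : a ^ k = a ^ s := by
  have hper : Function.Periodic (fun j => a ^ (j + 1)) (m - 1) := fun j =>
    by simpa only [add_right_comm] using pow_add_pred_eq_pow h (Nat.succ_pos j)
  obtain ⟨k, rfl⟩ := Nat.exists_eq_add_one_of_ne_zero hk.ne'
  obtain ⟨s, rfl⟩ := Nat.exists_eq_add_one_of_ne_zero hs.ne'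
  rw [← hper.map_mod_nat k, ← hper.map_mod_nat s, Nat.ModEq.add_right_cancel' 1 hks]

theorem DerK_eq_of_pow_eq {g : Type*} [LieRing g] [LieAlgebra ℂ g] {D : g →ₗ[ℂ] g} {k s : ℕ}
    (h : D ^ k = D ^ s) : DerK D k = DerK D s := by
  ext δ
  change (_ ∧ ∀ x y, _) ↔ (_ ∧ ∀ x y, _)
  rw [h]

open PowerSeries in
theorem stmt19_general {g : Type*} [LieRing g] [LieAlgebra ℂ g]
    (D : g →ₗ[ℂ] g) (m : ℕ)
    (hDm : D ^ m = D) :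
    (∀ k s : ℕ, 0 < k → 0 < s → k % (m - 1) = s % (m - 1) →
      DerK D k = DerK D s) ∧
    (PowerSeries.mk fun k => (Module.finrank ℂ (DerK D k) : ℚ)) *
        (1 - PowerSeries.X ^ (m - 1)) =
      PowerSeries.C (Module.finrank ℂ (DerK D 0) : ℚ) *
          (1 - PowerSeries.X ^ (m - 1)) +
        ∑ k ∈ Finset.Icc 1 (m - 1),
          PowerSeries.C (Module.finrank ℂ (DerK D k) : ℚ) *
            PowerSeries.X ^ k := by
  have hDerK : ∀ k s : ℕ, 0 < k → 0 < s → k % (m - 1) = s % (m - 1) → DerK D k = DerK D s :=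
    fun k s hk hs hks => DerK_eq_of_pow_eq (pow_eq_pow_of_modEq_pred hDm hk hs hks)
  refine ⟨hDerK, mk_mul_one_sub_X_pow_of_periodic_succ fun k => ?_⟩
  dsimp only
  rw [add_right_comm, hDerK _ _ (by omega) (by omega) (Nat.add_mod_right _ _)]

open PowerSeries in
/-- if `D` is a multiplicative Hom-Lie structure on a
finite-dimensional complex Lie algebra `g` with `D^m = D` (`m ≥ 2`), then
`Der_k(g) = Der_s(g)` whenever `k, s > 0` and `k ≡ s mod (m-1)`, and the
Hilbert series `Σ dim Der_k(g) tᵏ` equals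
`(ℓ₀(1-t^{m-1}) + Σ_{k=1}^{m-1} ℓ_k tᵏ)/(1-t^{m-1})` where
`ℓ_k = dim Der_k(g)`. -/
theorem stmt19 {g : Type*} [LieRing g] [LieAlgebra ℂ g] [FiniteDimensional ℂ g]
    (D : g →ₗ[ℂ] g) (m : ℕ) (hm : 2 ≤ m)
    (hmul : ∀ x y, D ⁅x, y⁆ = ⁅D x, D y⁆)
    (hhj : ∀ x y z : g, ⁅D x, ⁅y, z⁆⁆ + ⁅D y, ⁅z, x⁆⁆ + ⁅D z, ⁅x, y⁆⁆ = 0)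
    (hDm : D ^ m = D) :
    (∀ k s : ℕ, 0 < k → 0 < s → k % (m - 1) = s % (m - 1) →
      DerK D k = DerK D s) ∧
    (PowerSeries.mk fun k => (Module.finrank ℂ (DerK D k) : ℚ)) *
        (1 - PowerSeries.X ^ (m - 1)) =
      PowerSeries.C (Module.finrank ℂ (DerK D 0) : ℚ) *
          (1 - PowerSeries.X ^ (m - 1)) +
        ∑ k ∈ Finset.Icc 1 (m - 1),
          PowerSeries.C (Module.finrank ℂ (DerK D k) : ℚ) *
            PowerSeries.X ^ k :=
  stmt19_general D m hDm
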